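/- arXiv:1609.01321 — 8 statements merged into one kernel-verified Lean document; each statement's English description precedes it below -/
import Mathlib

section
/- In the ring of formal power series ℚ[[X]], let B be the power series whose k-th coefficient is b_k = C(5k+1, k)/(5k+1) (where C denotes the binomial coefficient). Then X·B⁵ = B − 1. Equivalently, the formal power series u = −B = −∑_{k≥0} b_k X^k satisfies X·u⁵ − u − 1 = 0, so the coefficients of the regular perturbation series for the root of εu⁵ − u − 1 = 0 near −1 are given by u_k = −C(5k+1,k)/(5k+1). -/
/-!
With `A p r n = r / (p n + r) * C(p n + r, n)`, Pascal's rule and absorption give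
`A p (r+1) (n+1) = A p r (n+1) + A p (r+p) n`, i.e. the generating functions `G r` satisfy
`G 0 = 1` and `G (r+1) = G r + X * G (r+p)`. The defects `G 1 * G r - G (r+1)` obey the same
recurrence but start at `0`, and such a family vanishes (induct on the coefficient index, then on
`r`). Hence `G r = (G 1) ^ r`, and the recurrence at `r = 0` reads `G 1 = 1 + X * (G 1) ^ p`.
-/

open PowerSeries

theorem PowerSeries.eq_zero_of_succ_eq_add_X_mul {R : Type*} [Semiring R] {D : ℕ → R⟦X⟧}
    {p : ℕ} (h0 : D 0 = 0) (hsucc : ∀ r, D (r + 1) = D r + X * D (r + p)) (r : ℕ) :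
    D r = 0 := by
  ext n
  rw [map_zero]
  induction n using Nat.strong_induction_on generalizing r with
  | _ n ih =>
    induction r with
    | zero => simp [h0]
    | succ r ihr =>
      rw [hsucc, map_add, ihr, zero_add]
      cases n with
      | zero => simp
      | succ n => rw [coeff_succ_X_mul, ih n n.lt_succ_self]

/-- The `n = 0` branch repairs the junk value `0 / 0` of the closed form at `r = n = 0`. -/
noncomputable def fussCatalan (p r n : ℕ) : ℚ :=
  if n = 0 then 1 else r / (p * n + r) * (p * n + r).choose n

@[simp]
lemma fussCatalan_zero_right (p r : ℕ) : fussCatalan p r 0 = 1 := if_pos rfl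

lemma fussCatalan_succ (p r n : ℕ) :
    fussCatalan p r (n + 1) =
      r / ((p * (n + 1) + r : ℕ) : ℚ) * (p * (n + 1) + r).choose (n + 1) := by
  simp [fussCatalan]

lemma fussCatalan_succ_succ (p r n : ℕ) :
    fussCatalan p (r + 1) (n + 1) = fussCatalan p r (n + 1) + fussCatalan p (r + p) n := by
  obtain ⟨m, hm⟩ : ∃ m, p * n + p + r = m := ⟨_, rfl⟩
  rcases Nat.eq_zero_or_pos m with rfl | hmpos
  · obtain ⟨rfl, rfl⟩ : p = 0 ∧ r = 0 := by omega
    cases n <;> simp [fussCatalan, Nat.choose_eq_zero_of_lt]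
  have hm0 : (m : ℚ) ≠ 0 := by positivity
  have hmq : (m : ℚ) = p * n + p + r := by rw [← hm]; push_cast; ring
  have hlast : fussCatalan p (r + p) n = (r + p) / m * m.choose n := by
    cases n with
    | zero =>
      rw [fussCatalan_zero_right, Nat.choose_zero_right, Nat.cast_one, mul_one, eq_div_iff hm0,
        one_mul, hmq]
      ring
    | succ n =>
      rw [fussCatalan_succ, show p * (n + 1) + (r + p) = m by rw [← hm]; ring]
      push_cast
      ring
  have hpascal : ((m + 1).choose (n + 1) : ℚ) = m.choose (n + 1) + m.choose n := by
    rw [Nat.choose_succ_succ', Nat.cast_add, add_comm]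
  have habsorb : ((m + 1).choose (n + 1) : ℚ) * (n + 1) = (m + 1) * m.choose n := by
    exact_mod_cast (m.add_one_mul_choose_eq n).symm
  rw [hlast, fussCatalan_succ, fussCatalan_succ,
    show p * (n + 1) + (r + 1) = m + 1 by rw [← hm]; ring,
    show p * (n + 1) + r = m by rw [← hm]; ring]
  push_cast
  rw [div_mul_eq_mul_div, div_mul_eq_mul_div, div_mul_eq_mul_div, ← add_div,
    div_eq_div_iff (by positivity) hm0]
  linear_combination ((m : ℚ) + 1) * r * hpascal + p * habsorb +
    ((m + 1).choose (n + 1) : ℚ) * hmq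

noncomputable def fussCatalanSeries (p r : ℕ) : ℚ⟦X⟧ :=
  mk (fussCatalan p r)

lemma fussCatalanSeries_zero (p : ℕ) : fussCatalanSeries p 0 = 1 := by
  ext (_ | n) <;> simp [fussCatalanSeries, fussCatalan_succ, coeff_one]

lemma fussCatalanSeries_succ (p r : ℕ) :
    fussCatalanSeries p (r + 1) = fussCatalanSeries p r + X * fussCatalanSeries p (r + p) := by
  ext (_ | n) <;> simp [fussCatalanSeries, coeff_succ_X_mul, fussCatalan_succ_succ]

lemma fussCatalanSeries_one_mul (p r : ℕ) :
    fussCatalanSeries p 1 * fussCatalanSeries p r = fussCatalanSeries p (r + 1) := by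
  refine sub_eq_zero.mp <| PowerSeries.eq_zero_of_succ_eq_add_X_mul
    (D := fun r => fussCatalanSeries p 1 * fussCatalanSeries p r - fussCatalanSeries p (r + 1))
    (p := p) (by simp only [fussCatalanSeries_zero, mul_one, zero_add, sub_self]) (fun r => ?_) r
  simp only [add_right_comm r p 1]
  linear_combination fussCatalanSeries p 1 * fussCatalanSeries_succ p r -
    fussCatalanSeries_succ p (r + 1)

lemma fussCatalanSeries_eq_pow (p r : ℕ) : fussCatalanSeries p r = fussCatalanSeries p 1 ^ r := by
  induction r with
  | zero => exact fussCatalanSeries_zero p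
  | succ r ih => rw [← fussCatalanSeries_one_mul, ih, pow_succ']

lemma X_mul_fussCatalanSeries_one_pow (p : ℕ) :
    X * fussCatalanSeries p 1 ^ p = fussCatalanSeries p 1 - 1 := by
  rw [← fussCatalanSeries_eq_pow, ← fussCatalanSeries_zero p, fussCatalanSeries_succ p 0,
    zero_add, add_sub_cancel_left]

/-- Let `B ∈ ℚ[[X]]` have `k`-th coefficient `C(5k+1,k)/(5k+1)` (Fuss–Catalan).
Then `X·B⁵ = B − 1`; equivalently `u = −B` satisfies `X·u⁵ − u − 1 = 0`, so
the regular perturbation series for the root of `εu⁵ − u − 1 = 0` near `−1`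
has coefficients `u_k = −C(5k+1,k)/(5k+1)`. -/
theorem stmt4 :
    PowerSeries.X * (PowerSeries.mk fun k => ((5*k+1).choose k : ℚ) / (5*k+1))^5
      = (PowerSeries.mk fun k => ((5*k+1).choose k : ℚ) / (5*k+1)) - 1 := by
  have hB : (PowerSeries.mk fun k => ((5*k+1).choose k : ℚ) / (5*k+1)) =
      fussCatalanSeries 5 1 := by
    ext (_ | k)
    · simp [fussCatalanSeries]
    · simp [fussCatalanSeries, fussCatalan_succ]
      ring
  rw [hB]
  exact X_mul_fussCatalanSeries_one_pow 5
end

section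
/- Let b_k = C(5k+1, k)/(5k+1) for k ∈ ℕ (where C denotes the binomial coefficient), viewed as positive real numbers. Then b_{k+1}/b_k → 3125/256 as k → ∞; consequently, for every real x with |x| < 256/3125 the series ∑_{k≥0} b_k x^k converges (the terms are summable), and for every real x with |x| > 256/3125 the series diverges (the terms b_k x^k are not summable). -/
open Filter

private lemma ratioAux (a c bb d : ℝ) (ha : bb ≠ 0) :
    Tendsto (fun k : ℕ => (a*k+c)/(bb*k+d)) atTop (nhds (a/bb)) := by
  have h1 : Tendsto (fun k : ℕ => a + c/k) atTop (nhds a) := by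
    simpa using tendsto_const_nhds.add (tendsto_const_div_atTop_nhds_zero_nat c)
  have h2 : Tendsto (fun k : ℕ => bb + d/k) atTop (nhds bb) := by
    simpa using tendsto_const_nhds.add (tendsto_const_div_atTop_nhds_zero_nat d)
  have h := h1.div h2 ha
  refine h.congr' ?_
  filter_upwards [eventually_ge_atTop 1] with k hk
  have hk0 : (k:ℝ) ≠ 0 := by positivity
  have e1 : a*k+c = (k:ℝ) * (a + c/k) := by field_simp
  have e2 : bb*k+d = (k:ℝ) * (bb + d/k) := by field_simp
  simp only [Pi.div_apply]
  rw [e1, e2, mul_div_mul_left _ _ hk0]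

private lemma chooseKey (k : ℕ) :
    (((5*k+6).choose (k+1) : ℤ)) * ((k+1)*(4*k+2)*(4*k+3)*(4*k+4)*(4*k+5)) =
    (((5*k+1).choose k : ℤ)) * ((5*k+2)*(5*k+3)*(5*k+4)*(5*k+5)*(5*k+6)) := by
  have h1 : ((5*k+1).choose k : ℤ) * (5*k+2) = ((5*k+2).choose k : ℤ) * (4*k+2) := by
    have := Nat.choose_mul_succ_eq (5*k+1) k
    have h : 5*k+1+1-k = 4*k+2 := by omega
    rw [h] at this
    exact_mod_cast this
  have h2 : ((5*k+2).choose k : ℤ) * (5*k+3) = ((5*k+3).choose k : ℤ) * (4*k+3) := by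
    have := Nat.choose_mul_succ_eq (5*k+2) k
    have h : 5*k+2+1-k = 4*k+3 := by omega
    rw [h] at this
    exact_mod_cast this
  have h3 : ((5*k+3).choose k : ℤ) * (5*k+4) = ((5*k+4).choose k : ℤ) * (4*k+4) := by
    have := Nat.choose_mul_succ_eq (5*k+3) k
    have h : 5*k+3+1-k = 4*k+4 := by omega
    rw [h] at this
    exact_mod_cast this
  have h4 : ((5*k+4).choose k : ℤ) * (5*k+5) = ((5*k+5).choose k : ℤ) * (4*k+5) := by
    have := Nat.choose_mul_succ_eq (5*k+4) k
    have h : 5*k+4+1-k = 4*k+5 := by omega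
    rw [h] at this
    exact_mod_cast this
  have h5 : ((5*k+6) : ℤ) * ((5*k+5).choose k : ℤ) = ((5*k+6).choose (k+1) : ℤ) * (k+1) := by
    have := Nat.add_one_mul_choose_eq (5*k+5) k
    exact_mod_cast this
  linear_combination (-((4*k+2):ℤ)*(4*k+3)*(4*k+4)*(4*k+5)) * h5
    - (((5*k+6):ℤ)*(4*k+2)*(4*k+3)*(4*k+4)) * h4
    - (((5*k+6):ℤ)*(5*k+5)*(4*k+2)*(4*k+3)) * h3
    - (((5*k+6):ℤ)*(5*k+5)*(5*k+4)*(4*k+2)) * h2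
    - (((5*k+6):ℤ)*(5*k+5)*(5*k+4)*(5*k+3)) * h1

/-- For `b_k = C(5k+1,k)/(5k+1)`, the ratio `b_{k+1}/b_k → 3125/256`;
hence `∑ b_k x^k` converges for `|x| < 256/3125` and diverges for
`|x| > 256/3125` (ratio test; radius of convergence of the perturbation
series for the root near `−1` of `εu⁵ − u − 1 = 0`). -/
theorem stmt5 (b : ℕ → ℝ)
    (hb : ∀ k, b k = (((5*k+1).choose k : ℝ)) / (5*k+1)) :
    Filter.Tendsto (fun k => b (k+1) / b k) Filter.atTop (nhds (3125/256)) ∧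
    (∀ x : ℝ, |x| < 256/3125 → Summable (fun k => b k * x^k)) ∧
    (∀ x : ℝ, |x| > 256/3125 → ¬ Summable (fun k => b k * x^k)) := by
  have hpos : ∀ k, 0 < b k := by
    intro k
    rw [hb k]
    have h1 : 0 < (5*k+1).choose k := Nat.choose_pos (by omega)
    positivity
  have hratio : ∀ k : ℕ, b (k+1) / b k =
      ((5*(k:ℝ)+1)/((k:ℝ)+1)) * ((5*k+2)/(4*k+2)) * ((5*k+3)/(4*k+3))
        * ((5*k+4)/(4*k+4)) * ((5*k+5)/(4*k+5)) := by
    intro k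
    have hc : (5*(k+1)+1).choose (k+1) = (5*k+6).choose (k+1) := by ring_nf
    have key : (((5*k+6).choose (k+1) : ℝ)) * (((k:ℝ)+1)*(4*k+2)*(4*k+3)*(4*k+4)*(4*k+5)) =
        (((5*k+1).choose k : ℝ)) * ((5*(k:ℝ)+2)*(5*k+3)*(5*k+4)*(5*k+5)*(5*k+6)) := by
      exact_mod_cast congrArg (fun z : ℤ => (z : ℝ)) (chooseKey k)
    have hC1 : (0:ℝ) < ((5*k+1).choose k : ℝ) := by
      exact_mod_cast Nat.choose_pos (show k ≤ 5*k+1 by omega)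
    rw [hb (k+1), hb k, hc]
    push_cast
    have hk : (0:ℝ) ≤ (k:ℝ) := Nat.cast_nonneg k
    field_simp
    nlinarith [key, sq_nonneg ((k:ℝ)), hC1, hk]
  have htend : Filter.Tendsto (fun k => b (k+1) / b k) Filter.atTop (nhds (3125/256)) := by
    have t1 : Tendsto (fun k : ℕ => (5*(k:ℝ)+1)/((k:ℝ)+1)) atTop (nhds (5/1)) := by
      simpa using ratioAux 5 1 1 1 one_ne_zero
    have t2 := ratioAux 5 2 4 2 (by norm_num : (4:ℝ) ≠ 0)
    have t3 := ratioAux 5 3 4 3 (by norm_num : (4:ℝ) ≠ 0)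
    have t4 := ratioAux 5 4 4 4 (by norm_num : (4:ℝ) ≠ 0)
    have t5 := ratioAux 5 5 4 5 (by norm_num : (4:ℝ) ≠ 0)
    have T := ((((t1.mul t2).mul t3).mul t4).mul t5)
    have : (5/1 : ℝ) * (5/4) * (5/4) * (5/4) * (5/4) = 3125/256 := by norm_num
    rw [this] at T
    exact T.congr fun k => (hratio k).symm
  have hnorm : ∀ x : ℝ, x ≠ 0 →
      Tendsto (fun n : ℕ => ‖b (n+1) * x^(n+1)‖ / ‖b n * x^n‖) atTop
        (nhds (3125/256 * |x|)) := by
    intro x hx0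
    refine (htend.mul_const |x|).congr fun n => ?_
    have hbn : b n ≠ 0 := (hpos n).ne'
    have hxp : |x|^n ≠ 0 := pow_ne_zero n (abs_ne_zero.mpr hx0)
    rw [Real.norm_eq_abs, Real.norm_eq_abs, abs_mul, abs_mul,
      abs_of_pos (hpos (n+1)), abs_of_pos (hpos n), pow_succ, abs_mul, abs_pow]
    field_simp
  refine ⟨htend, ?_, ?_⟩
  · intro x hx
    by_cases hx0 : x = 0
    · subst hx0
      apply summable_of_ne_finset_zero (s := {0})
      intro k hk
      simp only [Finset.mem_singleton] at hk
      simp [zero_pow hk]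
    · refine summable_of_ratio_test_tendsto_lt_one (l := 3125/256 * |x|) ?_ ?_ (hnorm x hx0)
      · have := abs_nonneg x
        nlinarith
      · exact Filter.Eventually.of_forall fun n =>
          mul_ne_zero (hpos n).ne' (pow_ne_zero n hx0)
  · intro x hx
    have hx0 : x ≠ 0 := by
      intro h; rw [h] at hx; simp at hx; linarith
    refine not_summable_of_ratio_test_tendsto_gt_one (l := 3125/256 * |x|) ?_ (hnorm x hx0)
    nlinarith [abs_nonneg x]
end

section
/- Let α be a complex number with α⁴ = 1, and in ℂ[μ] let y₅ = α + (1/4)μ − (5/32)α³μ² + (5/32)α²μ³ − (385/2048)αμ⁴ + (1/4)μ⁵. Then μ⁶ divides the polynomial y₅⁵ − y₅ − μ; that is, y₅ solves the rescaled equation y⁵ − y − μ = 0 with residual O(μ⁶). -/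
open Polynomial

set_option maxHeartbeats 4000000 in
set_option maxRecDepth 8000 in
/-- For any fourth root of unity `α`, the fifth-order perturbation
approximation `y₅` of the root of the rescaled quintic `y⁵ − y − μ = 0`
near `α` has residual divisible by `μ⁶`. -/
theorem stmt6 (α : ℂ) (hα : α^4 = 1) :
    (X : Polynomial ℂ)^6 ∣
      ((C α + C (1/4 : ℂ) * X - C ((5/32) * α^3) * X^2 + C ((5/32) * α^2) * X^3
          - C ((385/2048) * α) * X^4 + C (1/4 : ℂ) * X^5)^5
        - (C α + C (1/4 : ℂ) * X - C ((5/32) * α^3) * X^2 + C ((5/32) * α^2) * X^3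
          - C ((385/2048) * α) * X^4 + C (1/4 : ℂ) * X^5)
        - X) := by
  refine ⟨C ((325685/8388608 : ℂ) * α^0) * X^3 + C ((262585265/4294967296 : ℂ) * α^0) * X^7 + C ((-6436098932315/70368744177664 : ℂ) * α^0) * X^11 + C ((2096364428805/70368744177664 : ℂ) * α^0) * X^15 + C ((1/1024 : ℂ) * α^0) * X^19 + C ((286365/2097152 : ℂ) * α^1) * X^2 + C ((-1011695245/4294967296 : ℂ) * α^1) * X^6 + C ((3742716737745/17592186044416 : ℂ) * α^1) * X^10 + C ((-978848431245185/36028797018963968 : ℂ) * α^1) * X^14 + C ((-1925/524288 : ℂ) * α^1) * X^18 + C ((-21255/65536 : ℂ) * α^2) * X^1 + C ((49013655/67108864 : ℂ) * α^2) * X^5 + C ((-47380006815/274877906944 : ℂ) * α^2) * X^9 + C ((3418568384025/562949953421312 : ℂ) * α^2) * X^13 + C ((1150725/134217728 : ℂ) * α^2) * X^17 + C ((23205/16384 : ℂ) * α^3) * X^0 + C ((-19893935/67108864 : ℂ) * α^3) * X^4 + C ((4776814675/68719476736 : ℂ) * α^3) * X^8 + C ((18103490915175/562949953421312 : ℂ)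 * α^3) * X^12 + C ((-1125832325/68719476736 : ℂ) * α^3) * X^16, Polynomial.funext fun s => ?_⟩
  simp only [eval_add, eval_sub, eval_mul, eval_pow, eval_C, eval_X, eval_one]
  linear_combination (((5/4 : ℂ) * α^0) * s^1 + ((255/1024 : ℂ) * α^0) * s^5 + ((284725/8388608 : ℂ) * α^0) * s^9 + ((220642225/4294967296 : ℂ) * α^0) * s^13 + ((-7123293699675/70368744177664 : ℂ) * α^0) * s^17 + ((1752767045125/70368744177664 : ℂ) * α^0) * s^21 + ((1/1 : ℂ) * α^1) * s^0 + ((-425/2048 : ℂ) * α^1) * s^4 + ((130225/2097152 : ℂ) * α^1) * s^8 + ((-1451933325/4294967296 : ℂ) * α^1) * s^12 + ((2755880892625/17592186044416 : ℂ) * α^1) * s^16 + ((-1153395902154625/36028797018963968 : ℂ) * α^1) * s^20 + ((-48325/65536 : ℂ) * α^2) * s^7 + ((56387625/134217728 : ℂ) * α^2) * s^11 + ((-51472105375/274877906944 : ℂ) * α^2) * s^15 + ((20292358233625/562949953421312 : ℂ) * α^2) * s^19 + ((-25/32 : ℂ) * α^3) * s^2 + ((3875/8192 : ℂ) * α^3)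 * s^6 + ((-27370125/67108864 : ℂ) * α^3) * s^10 + ((1657702875/8589934592 : ℂ) * α^3) * s^14 + ((-19637349225625/562949953421312 : ℂ) * α^3) * s^18 + ((-625/2048 : ℂ) * α^4) * s^5 + ((1537375/4194304 : ℂ) * α^4) * s^9 + ((-1339840625/8589934592 : ℂ) * α^4) * s^13 + ((65348868125/2199023255552 : ℂ) * α^4) * s^17 + ((125/512 : ℂ) * α^5) * s^4 + ((-101875/524288 : ℂ) * α^5) * s^8 + ((117160625/1073741824 : ℂ) * α^5) * s^12 + ((-98286088125/4398046511104 : ℂ) * α^5) * s^16 + ((3125/32768 : ℂ) * α^6) * s^7 + ((-4395625/67108864 : ℂ) * α^6) * s^11 + ((991921875/68719476736 : ℂ) * α^6) * s^15 + ((-625/16384 : ℂ) * α^7) * s^6 + ((978125/33554432 : ℂ) * α^7) * s^10 + ((-560440625/68719476736 : ℂ) * α^7) * s^14 + ((-46875/4194304 : ℂ) * α^8) * s^9 + ((2103125/536870912 : ℂ) * α^8) * s^13 + ((3125/1048576 : ℂ) * α^9) * s^8 + ((-3203125/2147483648 : ℂ) * α^9) * s^12 + ((15625/33554432 : ℂ)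 * α^10) * s^11 + ((-3125/33554432 : ℂ) * α^11) * s^10) * hα
end

section
/- Let ε > 0 and let w > 0 satisfy w·e^w = 2·e^{−1/ε}, and set x₀ = −1 − εw. Then the residual of x₀ in the equation 1 + x + ε·sech(x/ε) = 0 is exactly 1 + x₀ + ε/cosh(x₀/ε) = −εw³/(4 + w²). -/
/-- With `w = W(2e^{−1/ε}) > 0` and `x₀ = −1 − εw`, the residual of `x₀`
in `1 + x + ε·sech(x/ε) = 0` is exactly `−εw³/(4+w²)`. -/
theorem stmt8 (ε w : ℝ) (hε : 0 < ε) (hw : 0 < w)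
    (hW : w * Real.exp w = 2 * Real.exp (-1/ε)) :
    1 + (-1 - ε*w) + ε / Real.cosh ((-1 - ε*w)/ε) = -(ε * w^3) / (4 + w^2) := by
  have ht : (-1 - ε*w)/ε = -1/ε + (-w) := by field_simp; ring
  have hexp : Real.exp ((-1 - ε*w)/ε) = w/2 := by
    rw [ht, Real.exp_add]
    have : Real.exp (-1/ε) = w * Real.exp w / 2 := by linarith [hW]
    rw [this, Real.exp_neg]
    field_simp
  have hcosh : Real.cosh ((-1 - ε*w)/ε) = (w^2 + 4) / (4*w) := by
    rw [Real.cosh_eq, hexp, Real.exp_neg, hexp]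
    field_simp
    ring
  rw [hcosh]
  have h1 : (4:ℝ) + w^2 ≠ 0 := by positivity
  field_simp
  ring
end

section
/- Let ε > 0 and a₀ ∈ ℝ, and define u(t) = 4ε·e^{3ε²t} + a₀²·(e^{3ε²t} − 1) and a(t) = 2·√ε·a₀/√(u(t)). Then for all t ≥ 0 (where u(t) ≥ 4ε > 0), a satisfies the amplitude equation a'(t) = −(3/8)·ε·a(t)·(a(t)² + 4ε) with initial value a(0) = a₀. -/
open Real

/-! With `e = exp (3ε²t)` the denominator `u = 4εe + a₀²(e - 1)` satisfies the linear equation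
`u' = 3ε²(u + a₀²)`, so `a = 2√ε a₀ / √u` has `a' = -(a/2) u'/u`, while `a² = 4εa₀²/u` turns
`a₀²/u` into `a²/(4ε)`: the Bernoulli equation for `a` is the linear equation for `u`. -/

theorem HasDerivAt.const_div_sqrt {u : ℝ → ℝ} {u' t : ℝ} (hu : HasDerivAt u u' t)
    (hpos : 0 < u t) (C : ℝ) :
    HasDerivAt (fun s => C / √(u s)) (-(C / √(u t)) * u' / (2 * u t)) t := by
  have hsqrt : HasDerivAt (fun s => √(u s)) (u' / (2 * √(u t))) t := hu.sqrt hpos.ne'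
  have hs : 0 < √(u t) := sqrt_pos.mpr hpos
  refine ((hasDerivAt_const t C).div hsqrt hs.ne').congr_deriv ?_
  rw [sq_sqrt hpos.le]
  field_simp
  rw [← sq_sqrt hpos.le]
  ring

theorem hasDerivAt_mul_exp_add_mul_exp_sub_one (p q k t : ℝ) :
    HasDerivAt (fun s => p * exp (k * s) + q * (exp (k * s) - 1))
      (k * (p * exp (k * t) + q * (exp (k * t) - 1) + q)) t := by
  have hexp : HasDerivAt (fun s => exp (k * s)) (exp (k * t) * k) t := by
    simpa using ((hasDerivAt_id t).const_mul k).exp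
  exact ((hexp.const_mul p).add ((hexp.sub_const 1).const_mul q)).congr_deriv (by ring)

/-- The multiple-scales amplitude
`a(t) = 2√ε·a₀/√(4ε·e^{3ε²t} + a₀²(e^{3ε²t} − 1))`
exactly solves `a' = −(3/8)εa(a² + 4ε)` with `a(0) = a₀`. -/
theorem stmt12 (ε a₀ : ℝ) (hε : 0 < ε) :
    let u : ℝ → ℝ := fun t => 4*ε*Real.exp (3*ε^2*t) + a₀^2*(Real.exp (3*ε^2*t) - 1)
    let a : ℝ → ℝ := fun t => 2 * Real.sqrt ε * a₀ / Real.sqrt (u t)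
    (∀ t : ℝ, 0 ≤ t → deriv a t = -(3/8) * ε * a t * ((a t)^2 + 4*ε)) ∧
    a 0 = a₀ := by
  intro u a
  have hsqrt_ε : √ε ^ 2 = ε := sq_sqrt hε.le
  constructor
  · intro t ht
    have hu_pos : 0 < u t := by
      have : 1 ≤ exp (3 * ε ^ 2 * t) := one_le_exp (by positivity)
      simp only [u]
      nlinarith [sq_nonneg a₀]
    have hu : HasDerivAt u (3 * ε ^ 2 * (u t + a₀ ^ 2)) t :=
      hasDerivAt_mul_exp_add_mul_exp_sub_one (4 * ε) (a₀ ^ 2) (3 * ε ^ 2) t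
    have ha_sq : a t ^ 2 = 4 * ε * a₀ ^ 2 / u t := by
      simp only [a, div_pow, mul_pow, sq_sqrt hu_pos.le, hsqrt_ε]
      ring
    have ha : deriv a t = -a t * (3 * ε ^ 2 * (u t + a₀ ^ 2)) / (2 * u t) :=
      (hu.const_div_sqrt hu_pos (2 * √ε * a₀)).deriv
    rw [ha, ha_sq]
    field_simp
    ring
  · have h_sqrt_u₀ : √(u 0) = 2 * √ε := by
      rw [show u 0 = 2 ^ 2 * ε by norm_num [u], sqrt_mul (by positivity),
        sqrt_sq zero_le_two]
    have : √ε ≠ 0 := (sqrt_pos.mpr hε).ne'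
    simp only [a, h_sqrt_u₀]
    field_simp
end

section
/- Let z(ε, τ) = e^{−(3/4)ετ}·cos(τ − ετ²/4). Then for all real ε and τ (with ' denoting d/dτ): (1 + ετ)·z'' + 2ε·z' + z = e^{−(3/4)ετ}·[ (ε²·((3/4)τ² − 15/16) + ε³·((9/16)τ − (1/4)τ³))·cos(τ − ετ²/4) + ((9/4)·ε²τ − (3/4)·ε³τ²)·sin(τ − ετ²/4) ] exactly. In particular the residual of the renormalization-group solution is O(ε²), contains at order εⁿ only powers of τ up to τ^{n+1} (not τ^{2n+1}), and carries the same decaying factor e^{−(3/4)ετ} as the solution itself. -/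
/-! For `z = e^{aτ} cos φ(τ)` one has `z' = e^{aτ}(a cos φ − φ' sin φ)` and
`z'' = e^{aτ}((a² − φ'²) cos φ − (2aφ' + φ'') sin φ)`. With `a = −3ε/4` and
`φ = τ − ετ²/4` (so `φ' = 1 − ετ/2`, `φ'' = −ε/2`) the residual is then a polynomial
identity in `ε`, `τ`, `cos φ` and `sin φ`. -/

/-- Renormalization-group solution of the lengthening pendulum. -/
noncomputable def zRenorm (ε : ℝ) : ℝ → ℝ := fun τ =>
  Real.exp (-(3/4)*ε*τ) * Real.cos (τ - ε*τ^2/4)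

open Real

section DampedOscillation

lemma hasDerivAt_exp_const_mul (a τ : ℝ) :
    HasDerivAt (fun t => exp (a * t)) (exp (a * τ) * a) τ :=
  ((hasDerivAt_id τ).const_mul a).exp.congr_deriv (by simp)

variable {a τ φ' : ℝ} {φ : ℝ → ℝ}

lemma hasDerivAt_exp_mul_cos (hφ : HasDerivAt φ φ' τ) :
    HasDerivAt (fun t => exp (a * t) * cos (φ t))
      (a * (exp (a * τ) * cos (φ τ)) - φ' * (exp (a * τ) * sin (φ τ))) τ :=
  ((hasDerivAt_exp_const_mul a τ).mul hφ.cos).congr_deriv (by ring)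

lemma hasDerivAt_exp_mul_sin (hφ : HasDerivAt φ φ' τ) :
    HasDerivAt (fun t => exp (a * t) * sin (φ t))
      (a * (exp (a * τ) * sin (φ τ)) + φ' * (exp (a * τ) * cos (φ τ))) τ :=
  ((hasDerivAt_exp_const_mul a τ).mul hφ.sin).congr_deriv (by ring)

lemma hasDerivAt_deriv_exp_mul_cos {dφ : ℝ → ℝ} {φ'' : ℝ}
    (hφ : ∀ t, HasDerivAt φ (dφ t) t) (hdφ : HasDerivAt dφ φ'' τ) :
    HasDerivAt (deriv fun t => exp (a * t) * cos (φ t))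
      (exp (a * τ) * ((a ^ 2 - dφ τ ^ 2) * cos (φ τ)
        - (2 * a * dφ τ + φ'') * sin (φ τ))) τ := by
  have hderiv : (deriv fun t => exp (a * t) * cos (φ t)) =
      fun t => a * (exp (a * t) * cos (φ t)) - dφ t * (exp (a * t) * sin (φ t)) :=
    funext fun t => (hasDerivAt_exp_mul_cos (hφ t)).deriv
  rw [hderiv]
  exact (((hasDerivAt_exp_mul_cos (hφ τ)).const_mul a).sub
    (hdφ.mul (hasDerivAt_exp_mul_sin (hφ τ)))).congr_deriv (by ring)

end DampedOscillation

lemma hasDerivAt_renormPhase (ε τ : ℝ) :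
    HasDerivAt (fun t : ℝ => t - ε * t ^ 2 / 4) (1 - ε * τ / 2) τ :=
  ((hasDerivAt_id τ).sub (((hasDerivAt_pow 2 τ).const_mul ε).div_const 4)).congr_deriv
    (by simp only [Nat.cast_ofNat]; ring)

lemma hasDerivAt_renormPhase_deriv (ε τ : ℝ) :
    HasDerivAt (fun t : ℝ => 1 - ε * t / 2) (-(ε / 2)) τ :=
  ((hasDerivAt_const τ 1).sub (((hasDerivAt_id τ).const_mul ε).div_const 2)).congr_deriv
    (by simp)

/-- Exact residual of the renormalization-group solution
`z = e^{−(3/4)ετ}cos(τ − ετ²/4)` of the lengthening pendulum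
`(1 + ετ)θ'' + 2εθ' + θ = 0`: it is `O(ε²)`, carries the decaying factor
`e^{−(3/4)ετ}`, and at order `εⁿ` contains only powers of `τ` up to `τ^{n+1}`. -/
theorem stmt15 : ∀ (ε τ : ℝ),
    (1 + ε*τ) * deriv (deriv (zRenorm ε)) τ + 2*ε * deriv (zRenorm ε) τ + zRenorm ε τ
      = Real.exp (-(3/4)*ε*τ) *
          ((ε^2 * ((3/4)*τ^2 - 15/16) + ε^3 * ((9/16)*τ - (1/4)*τ^3))
              * Real.cos (τ - ε*τ^2/4)
            + ((9/4)*ε^2*τ - (3/4)*ε^3*τ^2) * Real.sin (τ - ε*τ^2/4)) := by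
  intro ε τ
  have hz' : HasDerivAt (zRenorm ε) _ τ :=
    hasDerivAt_exp_mul_cos (hasDerivAt_renormPhase ε τ)
  have hz'' : HasDerivAt (deriv (zRenorm ε)) _ τ :=
    hasDerivAt_deriv_exp_mul_cos (hasDerivAt_renormPhase ε) (hasDerivAt_renormPhase_deriv ε τ)
  rw [hz''.deriv, hz'.deriv, zRenorm]
  ring
end

section
/- Let z(ε, τ) = e^{−(3/4)ετ}·cos(τ − ετ²/4), let p(τ) = (3/4)τ² − 15/16, and for fixed real τ define the modified residual R(ε) = (1 + ετ + ε²·p(τ))·z'' + 2·(ε + (3/2)·ε²·τ)·z' + z (derivatives with respect to τ). Then, as a function of ε, R(0) = 0, R'(0) = 0, and R''(0) = −(3/2)·τ·sin(τ); i.e. the ε²-Taylor coefficient of the modified residual is −(3/4)·τ·sin(τ), which grows only linearly in τ rather than quadratically. -/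
open Real

section SquareFactor

variable {𝕜 E : Type*} [NontriviallyNormedField 𝕜] [NormedAddCommGroup E] [NormedSpace 𝕜 E]

theorem deriv_sq_smul {G : 𝕜 → E} (hG : Differentiable 𝕜 G) :
    deriv (fun x => x ^ 2 • G x) = fun x => (2 * x) • G x + x ^ 2 • deriv G x := by
  funext x
  have h : HasDerivAt (fun x => x ^ 2 • G x) (x ^ 2 • deriv G x + (2 * x) • G x) x :=
    ((hasDerivAt_pow 2 x).smul (hG x).hasDerivAt).congr_deriv (by simp)
  rw [h.deriv, add_comm]

theorem deriv_deriv_sq_smul_zero {G : 𝕜 → E} (hG : Differentiable 𝕜 G)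
    (hG' : DifferentiableAt 𝕜 (deriv G) 0) :
    deriv (deriv fun x => x ^ 2 • G x) 0 = (2 : 𝕜) • G 0 := by
  rw [deriv_sq_smul hG]
  have h : HasDerivAt (fun x => (2 * x) • G x + x ^ 2 • deriv G x) ((2 : 𝕜) • G 0) 0 :=
    ((((hasDerivAt_id (0 : 𝕜)).const_mul 2).smul (hG 0).hasDerivAt).add
      ((hasDerivAt_pow 2 (0 : 𝕜)).smul hG'.hasDerivAt)).congr_deriv (by simp)
  exact h.deriv

end SquareFactor

theorem hasDerivAt_exp_mul_cos_add_sin {a f g φ : ℝ → ℝ} {a' f' g' φ' x : ℝ}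
    (ha : HasDerivAt a a' x) (hf : HasDerivAt f f' x) (hg : HasDerivAt g g' x)
    (hφ : HasDerivAt φ φ' x) :
    HasDerivAt (fun t => exp (a t) * (f t * cos (φ t) + g t * sin (φ t)))
      (exp (a x) * ((a' * f x + f' + φ' * g x) * cos (φ x)
        + (a' * g x + g' - φ' * f x) * sin (φ x))) x :=
  (ha.exp.mul ((hf.mul hφ.cos).add (hg.mul hφ.sin))).congr_deriv (by
    simp only [Pi.add_apply, Pi.mul_apply]; ring)

section RenormalizedPendulum

variable (ε : ℝ)

theorem hasDerivAt_zRenorm_exponent (t : ℝ) :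
    HasDerivAt (fun t => -(3/4) * ε * t) (-(3/4) * ε) t := by
  simpa using (hasDerivAt_id t).const_mul (-(3/4) * ε)

theorem hasDerivAt_zRenorm_phase (t : ℝ) :
    HasDerivAt (fun t => t - ε * t ^ 2 / 4) (1 - ε * t / 2) t :=
  ((hasDerivAt_id t).sub (((hasDerivAt_pow 2 t).const_mul ε).div_const 4)).congr_deriv
    (by simp only [Nat.cast_ofNat, Nat.add_one_sub_one, pow_one, sub_right_inj]; ring)

theorem deriv_zRenorm :
    deriv (zRenorm ε) = fun t => exp (-(3/4) * ε * t) *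
      (-(3/4) * ε * cos (t - ε * t ^ 2 / 4) + -(1 - ε * t / 2) * sin (t - ε * t ^ 2 / 4)) := by
  funext t
  have h := hasDerivAt_exp_mul_cos_add_sin (hasDerivAt_zRenorm_exponent ε t)
    (hasDerivAt_const t 1) (hasDerivAt_const t 0) (hasDerivAt_zRenorm_phase ε t)
  simp only [one_mul, zero_mul, add_zero, mul_one, mul_zero, zero_sub] at h
  exact h.deriv

theorem deriv_deriv_zRenorm (t : ℝ) :
    deriv (deriv (zRenorm ε)) t = exp (-(3/4) * ε * t) *
      (((9/16) * ε ^ 2 - (1 - ε * t / 2) ^ 2) * cos (t - ε * t ^ 2 / 4)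
        + ((3/2) * ε * (1 - ε * t / 2) + ε / 2) * sin (t - ε * t ^ 2 / 4)) := by
  have hg : HasDerivAt (fun t => -(1 - ε * t / 2)) (ε / 2) t :=
    ((((hasDerivAt_id t).const_mul ε).div_const 2).const_sub 1).neg.congr_deriv (by simp)
  rw [deriv_zRenorm]
  refine ((hasDerivAt_exp_mul_cos_add_sin (hasDerivAt_zRenorm_exponent ε t)
    (hasDerivAt_const t _) hg (hasDerivAt_zRenorm_phase ε t)).congr_deriv ?_).deriv
  ring

end RenormalizedPendulum

noncomputable def residualQuotient (τ ε : ℝ) : ℝ :=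
  exp (-(3/4) * ε * τ) *
    (ε * ((τ ^ 3 / 2 - 21 * τ / 8) + ε * (((3/4) * τ ^ 2 - 15/16) * (9/16 - τ ^ 2 / 4)))
        * cos (τ - ε * τ ^ 2 / 4)
      + (-(3/4) * τ + ε * ((9/4) * τ ^ 2 - 15/8)
          - ε ^ 2 * ((3/4) * τ * ((3/4) * τ ^ 2 - 15/16)))
        * sin (τ - ε * τ ^ 2 / 4))

theorem residualQuotient_zero (τ : ℝ) : residualQuotient τ 0 = -(3/4) * τ * sin τ := by
  simp [residualQuotient]

theorem modifiedResidual_eq_sq_mul (τ ε : ℝ) :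
    (1 + ε * τ + ε ^ 2 * ((3/4) * τ ^ 2 - 15/16)) * deriv (deriv (zRenorm ε)) τ
      + 2 * (ε + (3/2) * ε ^ 2 * τ) * deriv (zRenorm ε) τ + zRenorm ε τ
      = ε ^ 2 * residualQuotient τ ε := by
  rw [deriv_deriv_zRenorm, deriv_zRenorm, zRenorm, residualQuotient]
  ring

theorem contDiff_residualQuotient (τ : ℝ) : ContDiff ℝ 2 (residualQuotient τ) := by
  unfold residualQuotient
  fun_prop

/-- Structured (optimal) backward error for the lengthening pendulum: with
`p(τ) = (3/4)τ² − 15/16`, the modified residual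
`R(ε) = (1 + ετ + ε²p(τ))z'' + 2(ε + (3/2)ε²τ)z' + z` satisfies `R(0) = 0`,
`R'(0) = 0` and `R''(0) = −(3/2)τ·sin τ`, so its `ε²`-Taylor coefficient
`−(3/4)τ·sin τ` grows only linearly in `τ`. -/
theorem stmt16 (τ : ℝ) :
    let p : ℝ → ℝ := fun s => (3/4)*s^2 - 15/16
    let R : ℝ → ℝ := fun ε =>
      (1 + ε*τ + ε^2 * p τ) * deriv (deriv (zRenorm ε)) τ
        + 2*(ε + (3/2)*ε^2*τ) * deriv (zRenorm ε) τ + zRenorm ε τ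
    R 0 = 0 ∧ deriv R 0 = 0 ∧ deriv (deriv R) 0 = -(3/2) * τ * Real.sin τ := by
  intro p R
  have hR : R = fun ε => ε ^ 2 • residualQuotient τ ε :=
    funext (modifiedResidual_eq_sq_mul τ)
  have hG := contDiff_residualQuotient τ
  have hG₁ : Differentiable ℝ (residualQuotient τ) := hG.differentiable two_ne_zero
  rw [hR, deriv_deriv_sq_smul_zero hG₁ (hG.differentiable_deriv_two 0), deriv_sq_smul hG₁]
  refine ⟨by simp, by simp, ?_⟩
  rw [residualQuotient_zero, smul_eq_mul]
  ring
end

section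
/- Let a, b, u₀ be real numbers and let ε be real with aε ≠ 1. Define λ(ε) = (a + b)/(1 − aε), z(t) = u₀·e^{−λ(ε)·t}, and g(ε) = a·e^{λ(ε)·ε} + b − λ(ε). Then: (i) for all real t, z'(t) + a·z(t − ε) + b·z(t) = g(ε)·z(t), so z exactly solves the delay equation with the coefficient b replaced by b + g(ε); and (ii) g(0) = 0 and g'(0) = 0, so the backward error g(ε) is O(ε²) as ε → 0. -/
/-!
An exponential is an eigenfunction of both differentiation and the shift `t ↦ t - ε`, so the
delay operator applied to `z` returns a multiple `g(ε) · z`. Since `λ(0) = a + b` and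
`λ'(0) = a (a + b)`, both `g(0) = a + b - λ(0)` and `g'(0) = a λ(0) - λ'(0)` vanish.
-/

open Real

theorem deriv_add_delay_add_of_exp (a b c u₀ ε t : ℝ) :
    deriv (fun t => u₀ * exp (-c * t)) t + a * (u₀ * exp (-c * (t - ε)))
      + b * (u₀ * exp (-c * t)) = (a * exp (c * ε) + b - c) * (u₀ * exp (-c * t)) := by
  have hderiv : deriv (fun t => u₀ * exp (-c * t)) t = u₀ * (exp (-c * t) * -c) := by
    simpa using (((hasDerivAt_id t).const_mul (-c)).exp.const_mul u₀).deriv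
  have hshift : exp (-c * (t - ε)) = exp (c * ε) * exp (-c * t) := by
    rw [← exp_add]; ring_nf
  rw [hderiv, hshift]
  ring

theorem hasDerivAt_div_one_sub_mul_zero (k a : ℝ) :
    HasDerivAt (fun e => k / (1 - a * e)) (k * a) 0 := by
  have hden : HasDerivAt (fun e : ℝ => 1 - a * e) (-a) 0 := by
    simpa using ((hasDerivAt_id (0 : ℝ)).const_mul a).const_sub 1
  simpa using (hasDerivAt_const (0 : ℝ) k).fun_div hden (by norm_num)

theorem hasDerivAt_mul_exp_mul_self_add_sub_zero (a b : ℝ) {lam : ℝ → ℝ} {l' : ℝ}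
    (hlam : HasDerivAt lam l' 0) :
    HasDerivAt (fun e => a * exp (lam e * e) + b - lam e) (a * lam 0 - l') 0 := by
  have hexp := (hlam.mul (hasDerivAt_id 0)).exp
  simpa using ((hexp.const_mul a).add_const b).fun_sub hlam

theorem stmt17_general (a b u₀ ε : ℝ) :
    let lam : ℝ → ℝ := fun e => (a + b) / (1 - a*e)
    let g : ℝ → ℝ := fun e => a * Real.exp (lam e * e) + b - lam e
    let z : ℝ → ℝ := fun t => u₀ * Real.exp (-(lam ε) * t)
    (∀ t : ℝ, deriv z t + a * z (t - ε) + b * z t = g ε * z t) ∧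
    g 0 = 0 ∧ deriv g 0 = 0 := by
  intro lam g z
  refine ⟨fun t => deriv_add_delay_add_of_exp a b (lam ε) u₀ ε t, by simp [g, lam], ?_⟩
  have hg := hasDerivAt_mul_exp_mul_self_add_sub_zero a b
    (hasDerivAt_div_one_sub_mul_zero (a + b) a)
  rw [hg.deriv]
  simp only [mul_zero, sub_zero, div_one]
  ring

/-- Backward error for the vanishing-lag delay equation
`ẏ(t) + a·y(t − ε) + b·y(t) = 0`: the approximation
`z(t) = u₀·e^{−λ(ε)t}`, `λ(ε) = (a+b)/(1−aε)`, exactly solves the delay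
equation with `b` replaced by `b + g(ε)` where
`g(ε) = a·e^{λ(ε)ε} + b − λ(ε)` satisfies `g(0) = 0` and `g'(0) = 0`,
i.e. the backward error is `O(ε²)`. -/
theorem stmt17 (a b u₀ ε : ℝ) (hε : a * ε ≠ 1) :
    let lam : ℝ → ℝ := fun e => (a + b) / (1 - a*e)
    let g : ℝ → ℝ := fun e => a * Real.exp (lam e * e) + b - lam e
    let z : ℝ → ℝ := fun t => u₀ * Real.exp (-(lam ε) * t)
    (∀ t : ℝ, deriv z t + a * z (t - ε) + b * z t = g ε * z t) ∧
    g 0 = 0 ∧ deriv g 0 = 0 :=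
  stmt17_general a b u₀ ε
end
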